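/- The map x ↦ (x(t₁), …, x(t_{m−1})) is a bijection from the set of continuous solutions of the loaded Volterra integral equation onto the solution set {c ∈ ℝ^{m−1} : A(λ) c = d(λ)} of the associated linear algebraic system. -/

import Mathlib

/-!
For a fixed load vector `c` the loaded equation is the Volterra equation
`x = λ ∫ K x + g_c` with `g_c = f - ∑ a_j c_j`. On the triangle `t₀ ≤ s ≤ t ≤ T` the iterated
kernels satisfy `|K_{n+1}(t, s)| ≤ B^{n+1} (t - s)^n / n!`, so the Neumann series `R` converges
uniformly and satisfies `R = λ K + λ ∫ K R`; by Fubini on the triangle, `g + ∫ R g` solves the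
Volterra equation, and a Gronwall iteration shows it is the only solution. Hence `x` solves the
loaded equation iff `x = F - ∑ b_j x(t_j)`. Writing `sol c = F - ∑ b_j c_j` and `ev x = (x(t_j))_j`,
the solutions of the loaded equation are the fixed points of `sol ∘ ev`, those of `A c = d` are
the fixed points of `ev ∘ sol`, and `ev` is a bijection between the two.
-/

open MeasureTheory Matrix Set Function intervalIntegral

def triangle (a b : ℝ) : Set (ℝ × ℝ) := {q | a ≤ q.2 ∧ q.2 ≤ q.1 ∧ q.1 ≤ b}

-- A continuous retraction of the plane onto `triangle a b` (when `a ≤ b`).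
def projTriangle (a b : ℝ) (q : ℝ × ℝ) : ℝ × ℝ :=
  (max a (min q.1 b), max a (min q.2 (max a (min q.1 b))))

section Triangle

variable {a b : ℝ}

lemma isCompact_triangle : IsCompact (triangle a b) :=
  (isCompact_Icc.prod isCompact_Icc).of_isClosed_subset
    ((isClosed_le continuous_const continuous_snd).inter
      ((isClosed_le continuous_snd continuous_fst).inter
        (isClosed_le continuous_fst continuous_const)))
    fun _ ⟨h₁, h₂, h₃⟩ => ⟨⟨h₁.trans h₂, h₃⟩, h₁, h₂.trans h₃⟩

lemma continuous_projTriangle : Continuous (projTriangle a b) := by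
  unfold projTriangle; fun_prop

lemma projTriangle_mem (hab : a ≤ b) (q : ℝ × ℝ) : projTriangle a b q ∈ triangle a b :=
  ⟨le_max_left _ _, max_le (le_max_left _ _) (min_le_right _ _), max_le hab (min_le_right _ _)⟩

lemma projTriangle_of_mem {q : ℝ × ℝ} (hq : q ∈ triangle a b) : projTriangle a b q = q := by
  obtain ⟨h₁, h₂, h₃⟩ := hq
  simp [projTriangle, h₁, h₃, h₂, h₁.trans h₂]

lemma ContinuousOn.comp_projTriangle {E : Type*} [TopologicalSpace E] {φ : ℝ × ℝ → E}
    (hab : a ≤ b) (hφ : ContinuousOn φ (triangle a b)) : Continuous (φ ∘ projTriangle a b) :=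
  hφ.comp_continuous continuous_projTriangle (projTriangle_mem hab)

lemma ContinuousOn.triangle_row {φ : ℝ → ℝ → ℝ} (hφ : ContinuousOn (uncurry φ) (triangle a b))
    {t : ℝ} (ht : t ≤ b) : ContinuousOn (φ t) (Icc a t) :=
  hφ.comp (Continuous.prodMk_right t).continuousOn fun _ hs => ⟨hs.1, hs.2, ht⟩

lemma ContinuousOn.triangle_column {φ : ℝ → ℝ → ℝ} (hφ : ContinuousOn (uncurry φ) (triangle a b))
    {s : ℝ} (hs : a ≤ s) : ContinuousOn (φ · s) (Icc s b) :=
  hφ.comp (Continuous.prodMk_left s).continuousOn fun _ hz => ⟨hs, hz.1, hz.2⟩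

lemma ContinuousOn.comp_snd_triangle {g : ℝ → ℝ} (hg : ContinuousOn g (Icc a b)) :
    ContinuousOn (fun q : ℝ × ℝ => g q.2) (triangle a b) :=
  hg.comp continuous_snd.continuousOn fun _ hq => ⟨hq.1, hq.2.1.trans hq.2.2⟩

lemma continuousOn_integral_of_continuousOn_triangle {φ : ℝ → ℝ → ℝ} (hab : a ≤ b)
    (hφ : ContinuousOn (uncurry φ) (triangle a b)) :
    ContinuousOn (fun t => ∫ s in a..t, φ t s) (Icc a b) := by
  have hc : Continuous fun t => ∫ s in a..t, (uncurry φ ∘ projTriangle a b) (t, s) :=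
    continuous_parametric_intervalIntegral_of_continuous
      (f := fun t s => (uncurry φ ∘ projTriangle a b) (t, s)) (hφ.comp_projTriangle hab)
      continuous_id
  refine hc.continuousOn.congr fun t ht => integral_congr fun s hs => ?_
  rw [uIcc_of_le ht.1] at hs
  simp [projTriangle_of_mem (show (t, s) ∈ triangle a b from ⟨hs.1, hs.2, ht.2⟩)]

lemma ContinuousOn.intervalIntegrable_triangle_row_mul {φ : ℝ → ℝ → ℝ}
    (hφ : ContinuousOn (uncurry φ) (triangle a b)) {u : ℝ → ℝ} (hu : ContinuousOn u (Icc a b))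
    {t : ℝ} (ht : t ∈ Icc a b) : IntervalIntegrable (fun s => φ t s * u s) volume a t :=
  ((hφ.triangle_row ht.2).mul (hu.mono (Icc_subset_Icc_right ht.2))).intervalIntegrable_of_Icc ht.1

lemma integral_integral_swap_triangle {φ : ℝ → ℝ → ℝ} (hab : a ≤ b)
    (hφ : ContinuousOn (uncurry φ) (triangle a b)) :
    ∫ s in a..b, ∫ z in a..s, φ s z = ∫ z in a..b, ∫ s in z..b, φ s z := by
  set S : Set (ℝ × ℝ) := {q | q.2 ≤ q.1}
  have hS : MeasurableSet S := measurableSet_le measurable_snd measurable_fst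
  have hint : Integrable (S.indicator (uncurry φ))
      ((volume.restrict (Ioc a b)).prod (volume.restrict (Ioc a b))) := by
    rw [Measure.prod_restrict, integrable_indicator_iff hS, IntegrableOn,
      Measure.restrict_restrict hS]
    refine (hφ.integrableOn_compact isCompact_triangle).mono_set ?_
    rintro ⟨s, z⟩ ⟨hzs, ⟨-, hs⟩, hz, -⟩
    exact ⟨hz.le, hzs, hs⟩
  have lhs : ∫ s in a..b, ∫ z in a..s, φ s z
      = ∫ s in Ioc a b, ∫ z in Ioc a b, S.indicator (uncurry φ) (s, z) := by
    rw [integral_of_le hab]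
    refine setIntegral_congr_fun measurableSet_Ioc fun s hs => ?_
    have : (fun z => S.indicator (uncurry φ) (s, z)) = (Iic s).indicator (φ s) := by
      ext z; simp [S, indicator_apply]
    rw [this, setIntegral_indicator measurableSet_Iic, Ioc_inter_Iic, min_eq_right hs.2,
      integral_of_le hs.1.le]
  have rhs : ∫ z in a..b, ∫ s in z..b, φ s z
      = ∫ z in Ioc a b, ∫ s in Ioc a b, S.indicator (uncurry φ) (s, z) := by
    rw [integral_of_le hab]
    refine setIntegral_congr_fun measurableSet_Ioc fun z hz => ?_
    have : (fun s => S.indicator (uncurry φ) (s, z)) = (Ici z).indicator (φ · z) := by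
      ext s; simp [S, indicator_apply]
    have hsec : Ioc a b ∩ Ici z = Icc z b := by
      ext s
      simp only [mem_inter_iff, mem_Ioc, mem_Ici, mem_Icc]
      exact ⟨fun h => ⟨h.2, h.1.2⟩, fun h => ⟨⟨hz.1.trans_le h.1, h.2⟩, h.1⟩⟩
    rw [this, setIntegral_indicator measurableSet_Ici, hsec, integral_Icc_eq_integral_Ioc,
      integral_of_le hz.2]
  rw [lhs, rhs]
  exact integral_integral_swap (f := fun s z => S.indicator (uncurry φ) (s, z)) hint

lemma abs_integral_le_pow_div_factorial {v : ℝ → ℝ} {t M : ℝ} {n : ℕ} (hat : a ≤ t)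
    (hv : ContinuousOn v (Icc a t))
    (hbound : ∀ z ∈ Icc a t, |v z| ≤ M * (z - a) ^ n / n.factorial) :
    |∫ z in a..t, v z| ≤ M * (t - a) ^ (n + 1) / (n + 1).factorial := by
  calc |∫ z in a..t, v z| ≤ ∫ z in a..t, |v z| := abs_integral_le_integral_abs hat
    _ ≤ ∫ z in a..t, M * (z - a) ^ n / n.factorial :=
      integral_mono_on hat (hv.abs.intervalIntegrable_of_Icc hat)
        (by apply Continuous.intervalIntegrable; fun_prop) hbound
    _ = M * (t - a) ^ (n + 1) / (n + 1).factorial := by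
      rw [integral_comp_sub_right (fun z => M * z ^ n / n.factorial) a]
      simp only [sub_self, intervalIntegral.integral_div, intervalIntegral.integral_const_mul,
        integral_pow, Nat.factorial_succ]
      push_cast
      field_simp
      ring

end Triangle

-- `iteratedKernel K n` is the paper's `K_{n+1}`.
noncomputable def iteratedKernel (K : ℝ → ℝ → ℝ) : ℕ → ℝ → ℝ → ℝ
  | 0 => K
  | n + 1 => fun t s => ∫ z in s..t, K t z * iteratedKernel K n z s

-- Only used on the triangle, where the series converges (`hasSum_resolventKernel`).
noncomputable def resolventKernel (K : ℝ → ℝ → ℝ) (lam t s : ℝ) : ℝ :=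
  ∑' n, lam ^ (n + 1) * iteratedKernel K n t s

section Resolvent

variable {K : ℝ → ℝ → ℝ} {t₀ T : ℝ}

lemma eq_iteratedKernel_of_recursion {Kn : ℕ → ℝ → ℝ → ℝ} (hKn1 : ∀ t s, Kn 1 t s = K t s)
    (hKnrec : ∀ n, 2 ≤ n → ∀ t s, Kn n t s = ∫ z in s..t, K t z * Kn (n - 1) z s) (n : ℕ) :
    Kn (n + 1) = iteratedKernel K n := by
  induction n with
  | zero => exact funext₂ hKn1
  | succ n ih =>
    funext t s
    rw [hKnrec (n + 2) (by omega), show n + 2 - 1 = n + 1 by omega, ih]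
    rfl

lemma continuous_iteratedKernel (hK : Continuous (uncurry K)) (n : ℕ) :
    Continuous (uncurry (iteratedKernel K n)) := by
  induction n with
  | zero => exact hK
  | succ n ih =>
    have hintegrand : Continuous (uncurry fun (q : ℝ × ℝ) z => K q.1 z * iteratedKernel K n z q.2) :=
      (hK.comp (continuous_fst.fst.prodMk continuous_snd)).mul
        (ih.comp (continuous_snd.prodMk continuous_fst.snd))
    have hprim {x : ℝ × ℝ → ℝ} (hx : Continuous x) :=
      continuous_parametric_intervalIntegral_of_continuous (μ := volume) (a₀ := 0) hintegrand hx
    refine ((hprim continuous_fst).sub (hprim continuous_snd)).congr fun q => ?_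
    exact integral_interval_sub_left
      ((hintegrand.comp (Continuous.prodMk_right q)).intervalIntegrable _ _)
      ((hintegrand.comp (Continuous.prodMk_right q)).intervalIntegrable _ _)

lemma iteratedKernel_eqOn {K' : ℝ → ℝ → ℝ}
    (h : EqOn (uncurry K) (uncurry K') (triangle t₀ T)) (n : ℕ) :
    EqOn (uncurry (iteratedKernel K n)) (uncurry (iteratedKernel K' n)) (triangle t₀ T) := by
  induction n with
  | zero => exact h
  | succ n ih =>
    rintro ⟨t, s⟩ ⟨h₁, h₂, h₃⟩
    refine integral_congr fun z hz => ?_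
    rw [uIcc_of_le h₂] at hz
    exact congrArg₂ (· * ·) (@h (t, z) ⟨h₁.trans hz.1, hz.2, h₃⟩)
      (@ih (z, s) ⟨h₁, hz.1, hz.2.trans h₃⟩)

lemma continuousOn_iteratedKernel (hTT : t₀ ≤ T) (hK : ContinuousOn (uncurry K) (triangle t₀ T))
    (n : ℕ) : ContinuousOn (uncurry (iteratedKernel K n)) (triangle t₀ T) := by
  refine (continuous_iteratedKernel (K := curry (uncurry K ∘ projTriangle t₀ T))
    (hK.comp_projTriangle hTT) n).continuousOn.congr
    (iteratedKernel_eqOn (fun q hq => ?_) n)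
  simp [projTriangle_of_mem hq]

lemma abs_iteratedKernel_le {B : ℝ} (hK : ContinuousOn (uncurry K) (triangle t₀ T))
    (hB : ∀ q ∈ triangle t₀ T, |uncurry K q| ≤ B) (n : ℕ) {t s : ℝ}
    (hts : (t, s) ∈ triangle t₀ T) :
    |iteratedKernel K n t s| ≤ B ^ (n + 1) * (t - s) ^ n / n.factorial := by
  induction n generalizing t s with
  | zero => simpa [iteratedKernel] using hB _ hts
  | succ n ih =>
    obtain ⟨h₁, h₂, h₃⟩ := hts
    have hB0 : 0 ≤ B := (abs_nonneg _).trans (hB _ ⟨h₁, h₂, h₃⟩)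
    have hcont : ContinuousOn (fun z => K t z * iteratedKernel K n z s) (Icc s t) :=
      ((hK.triangle_row h₃).mono (Icc_subset_Icc_left h₁)).mul
        (((continuousOn_iteratedKernel (h₁.trans (h₂.trans h₃)) hK n).triangle_column h₁).mono
          (Icc_subset_Icc_right h₃))
    refine abs_integral_le_pow_div_factorial h₂ hcont fun z hz => ?_
    rw [abs_mul, pow_succ', mul_assoc, mul_div_assoc]
    exact mul_le_mul (hB (t, z) ⟨h₁.trans hz.1, hz.2, h₃⟩) (ih ⟨h₁, hz.1, hz.2.trans h₃⟩)
      (abs_nonneg _) hB0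

lemma exists_summable_bound_iteratedKernel (hK : ContinuousOn (uncurry K) (triangle t₀ T))
    (lam : ℝ) : ∃ u : ℕ → ℝ, Summable u ∧
      ∀ n, ∀ q ∈ triangle t₀ T, ‖lam ^ (n + 1) * iteratedKernel K n q.1 q.2‖ ≤ u n := by
  obtain ⟨B, hB⟩ := isCompact_triangle.exists_bound_of_continuousOn hK
  refine ⟨fun n => |lam| * B * (|lam| * B * (T - t₀)) ^ n / n.factorial,
    by simpa [mul_div_assoc] using (Real.summable_pow_div_factorial _).mul_left (|lam| * B),
    fun n q hq => ?_⟩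
  have hB0 : 0 ≤ B := (norm_nonneg _).trans (hB q hq)
  obtain ⟨h₁, h₂, h₃⟩ := hq
  calc ‖lam ^ (n + 1) * iteratedKernel K n q.1 q.2‖
      ≤ |lam| ^ (n + 1) * (B ^ (n + 1) * (q.1 - q.2) ^ n / n.factorial) := by
        rw [norm_mul, norm_pow, Real.norm_eq_abs, Real.norm_eq_abs]
        exact mul_le_mul_of_nonneg_left (abs_iteratedKernel_le hK hB n ⟨h₁, h₂, h₃⟩)
          (by positivity)
    _ ≤ |lam| ^ (n + 1) * (B ^ (n + 1) * (T - t₀) ^ n / n.factorial) := by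
        gcongr
    _ = |lam| * B * (|lam| * B * (T - t₀)) ^ n / n.factorial := by rw [mul_pow, mul_pow]; ring

lemma hasSum_resolventKernel (hK : ContinuousOn (uncurry K) (triangle t₀ T)) (lam : ℝ) {q : ℝ × ℝ}
    (hq : q ∈ triangle t₀ T) :
    HasSum (fun n => lam ^ (n + 1) * iteratedKernel K n q.1 q.2) (resolventKernel K lam q.1 q.2) :=
  have ⟨_, hu, hbound⟩ := exists_summable_bound_iteratedKernel hK lam
  (hu.of_norm_bounded fun n => hbound n q hq).hasSum

lemma continuousOn_resolventKernel (hTT : t₀ ≤ T) (hK : ContinuousOn (uncurry K) (triangle t₀ T))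
    (lam : ℝ) : ContinuousOn (uncurry (resolventKernel K lam)) (triangle t₀ T) :=
  have ⟨_, hu, hbound⟩ := exists_summable_bound_iteratedKernel hK lam
  continuousOn_tsum (fun n => continuousOn_const.mul (continuousOn_iteratedKernel hTT hK n))
    hu hbound

lemma resolventKernel_eq (hK : ContinuousOn (uncurry K) (triangle t₀ T)) (lam : ℝ) {t s : ℝ}
    (hts : (t, s) ∈ triangle t₀ T) :
    resolventKernel K lam t s =
      lam * K t s + lam * ∫ z in s..t, K t z * resolventKernel K lam z s := by
  obtain ⟨h₁, h₂, h₃⟩ : t₀ ≤ s ∧ s ≤ t ∧ t ≤ T := hts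
  obtain ⟨u, hu, hbound⟩ := exists_summable_bound_iteratedKernel hK lam
  have hKt : ContinuousOn (K t) (Icc s t) := (hK.triangle_row h₃).mono (Icc_subset_Icc_left h₁)
  have hIoc : uIoc s t ⊆ Icc s t := by rw [uIoc_of_le h₂]; exact Ioc_subset_Icc_self
  have hterm (n : ℕ) :
      ContinuousOn (fun z => K t z * (lam ^ (n + 1) * iteratedKernel K n z s)) (Icc s t) :=
    hKt.mul (continuousOn_const.mul
      (((continuousOn_iteratedKernel (h₁.trans (h₂.trans h₃)) hK n).triangle_column h₁).mono
        (Icc_subset_Icc_right h₃)))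
  have hseries : HasSum (fun n => lam ^ (n + 1) * iteratedKernel K (n + 1) t s)
      (∫ z in s..t, K t z * resolventKernel K lam z s) := by
    have hdct : HasSum (fun n => ∫ z in s..t, K t z * (lam ^ (n + 1) * iteratedKernel K n z s))
        (∫ z in s..t, K t z * resolventKernel K lam z s) :=
      intervalIntegral.hasSum_integral_of_dominated_convergence (fun n z => |K t z| * u n)
        (fun n => ((hterm n).mono hIoc).aestronglyMeasurable measurableSet_uIoc)
        (fun n => .of_forall fun z hz => by
          rw [norm_mul, Real.norm_eq_abs]
          exact mul_le_mul_of_nonneg_left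
            (hbound n (z, s) ⟨h₁, (hIoc hz).1, (hIoc hz).2.trans h₃⟩) (abs_nonneg _))
        (.of_forall fun z _ => hu.mul_left _)
        (by simp_rw [tsum_mul_left]
            exact (hKt.abs.mul continuousOn_const).intervalIntegrable_of_Icc h₂)
        (.of_forall fun z hz =>
          (hasSum_resolventKernel hK lam (q := (z, s))
            ⟨h₁, (hIoc hz).1, (hIoc hz).2.trans h₃⟩).mul_left (K t z))
    convert hdct using 2 with n
    simp only [mul_left_comm (K t _), intervalIntegral.integral_const_mul]
    rfl
  rw [resolventKernel,
    (hasSum_resolventKernel hK lam (q := (t, s)) ⟨h₁, h₂, h₃⟩).summable.tsum_eq_zero_add,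
    ← (hseries.mul_left lam).tsum_eq]
  congr 1
  · simp [iteratedKernel]
  · exact tsum_congr fun n => by ring

end Resolvent

section Volterra

variable {K : ℝ → ℝ → ℝ} {t₀ T lam : ℝ}

lemma eqOn_zero_of_volterra (hK : ContinuousOn (uncurry K) (triangle t₀ T)) {w : ℝ → ℝ}
    (hw : ContinuousOn w (Icc t₀ T))
    (hsol : ∀ t ∈ Icc t₀ T, w t = lam * ∫ s in t₀..t, K t s * w s) : EqOn w 0 (Icc t₀ T) := by
  obtain ⟨B, hB⟩ := isCompact_triangle.exists_bound_of_continuousOn hK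
  obtain ⟨M, hM⟩ := isCompact_Icc.exists_bound_of_continuousOn hw
  have hbound (n : ℕ) : ∀ t ∈ Icc t₀ T,
      |w t| ≤ M * (|lam| * B) ^ n * (t - t₀) ^ n / n.factorial := by
    induction n with
    | zero => simpa using hM
    | succ n ih =>
      intro t ht
      have hint_le := abs_integral_le_pow_div_factorial (v := fun s => K t s * w s)
        (M := B * (M * (|lam| * B) ^ n)) ht.1
        ((hK.triangle_row ht.2).mul (hw.mono (Icc_subset_Icc_right ht.2))) fun s hs => by
          have hKts := hB (t, s) ⟨hs.1, hs.2, ht.2⟩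
          rw [abs_mul, mul_assoc, mul_div_assoc]
          exact mul_le_mul hKts (ih s ⟨hs.1, hs.2.trans ht.2⟩) (abs_nonneg _)
            ((norm_nonneg _).trans hKts)
      calc |w t| = |lam| * |∫ s in t₀..t, K t s * w s| := by rw [hsol t ht, abs_mul]
        _ ≤ |lam| * (B * (M * (|lam| * B) ^ n) * (t - t₀) ^ (n + 1) / (n + 1).factorial) :=
          mul_le_mul_of_nonneg_left hint_le (abs_nonneg _)
        _ = M * (|lam| * B) ^ (n + 1) * (t - t₀) ^ (n + 1) / (n + 1).factorial := by ring
  intro t ht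
  have hlim := (FloorSemiring.tendsto_pow_div_factorial_atTop (|lam| * B * (t - t₀))).const_mul M
  rw [mul_zero] at hlim
  refine abs_nonpos_iff.mp (le_of_tendsto_of_tendsto' tendsto_const_nhds hlim fun n => ?_)
  simpa only [mul_pow, mul_div_assoc, mul_assoc] using hbound n t ht

lemma continuousOn_add_integral_resolventKernel_mul (hTT : t₀ ≤ T)
    (hK : ContinuousOn (uncurry K) (triangle t₀ T)) {g : ℝ → ℝ} (hg : ContinuousOn g (Icc t₀ T)) :
    ContinuousOn (fun t => g t + ∫ s in t₀..t, resolventKernel K lam t s * g s) (Icc t₀ T) :=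
  hg.add (continuousOn_integral_of_continuousOn_triangle
    (φ := fun t s => resolventKernel K lam t s * g s) hTT
    ((continuousOn_resolventKernel hTT hK lam).mul hg.comp_snd_triangle))

lemma volterra_resolventKernel_solution (hK : ContinuousOn (uncurry K) (triangle t₀ T))
    {g : ℝ → ℝ} (hg : ContinuousOn g (Icc t₀ T)) {t : ℝ} (ht : t ∈ Icc t₀ T) :
    g t + ∫ s in t₀..t, resolventKernel K lam t s * g s =
      lam * (∫ s in t₀..t, K t s * (g s + ∫ z in t₀..s, resolventKernel K lam s z * g z)) +
        g t := by
  set R := resolventKernel K lam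
  have hTT : t₀ ≤ T := ht.1.trans ht.2
  have hR := continuousOn_resolventKernel hTT hK lam
  have hgz := hg.comp_snd_triangle
  have hJ : ContinuousOn (fun s => ∫ z in t₀..s, R s z * g z) (Icc t₀ T) :=
    continuousOn_integral_of_continuousOn_triangle (φ := fun s z => R s z * g z) hTT (hR.mul hgz)
  have hswap : lam * ∫ s in t₀..t, K t s * ∫ z in t₀..s, R s z * g z =
      ∫ z in t₀..t, (R t z - lam * K t z) * g z := by
    have hKrow : ContinuousOn (fun q : ℝ × ℝ => K t q.1) (triangle t₀ t) :=
      hK.comp (continuous_const.prodMk continuous_fst).continuousOn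
        fun q hq => ⟨hq.1.trans hq.2.1, hq.2.2, ht.2⟩
    have hφ : ContinuousOn (uncurry fun s z => K t s * (R s z * g z)) (triangle t₀ t) :=
      hKrow.mul ((hR.mul hgz).mono fun q hq => ⟨hq.1, hq.2.1, hq.2.2.trans ht.2⟩)
    calc lam * ∫ s in t₀..t, K t s * ∫ z in t₀..s, R s z * g z
        = lam * ∫ s in t₀..t, ∫ z in t₀..s, K t s * (R s z * g z) := by
          congr 1
          exact integral_congr fun s _ => (intervalIntegral.integral_const_mul _ _).symm
      _ = lam * ∫ z in t₀..t, ∫ s in z..t, K t s * (R s z * g z) := by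
          rw [integral_integral_swap_triangle ht.1 hφ]
      _ = ∫ z in t₀..t, (lam * ∫ s in z..t, K t s * R s z) * g z := by
          rw [← intervalIntegral.integral_const_mul]
          refine integral_congr fun z _ => ?_
          simp only [mul_assoc, ← intervalIntegral.integral_mul_const]
      _ = ∫ z in t₀..t, (R t z - lam * K t z) * g z := by
          refine integral_congr fun z hz => ?_
          rw [uIcc_of_le ht.1] at hz
          simp only [R, resolventKernel_eq hK lam ⟨hz.1, hz.2, ht.2⟩, add_sub_cancel_left]
  have hsplit : ∫ s in t₀..t, K t s * (g s + ∫ z in t₀..s, R s z * g z) =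
      (∫ s in t₀..t, K t s * g s) + ∫ s in t₀..t, K t s * ∫ z in t₀..s, R s z * g z := by
    simp_rw [mul_add]
    exact integral_add (hK.intervalIntegrable_triangle_row_mul hg ht)
      (hK.intervalIntegrable_triangle_row_mul hJ ht)
  have hdiff : ∫ z in t₀..t, (R t z - lam * K t z) * g z =
      (∫ z in t₀..t, R t z * g z) - lam * ∫ z in t₀..t, K t z * g z := by
    simp_rw [sub_mul, mul_assoc]
    rw [← intervalIntegral.integral_const_mul]
    exact integral_sub (hR.intervalIntegrable_triangle_row_mul hg ht)
      ((hK.intervalIntegrable_triangle_row_mul hg ht).const_mul lam)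
  rw [hsplit, mul_add, hswap, hdiff]
  ring

lemma volterra_iff_resolventKernel (hTT : t₀ ≤ T) (hK : ContinuousOn (uncurry K) (triangle t₀ T))
    {g x : ℝ → ℝ} (hg : ContinuousOn g (Icc t₀ T)) (hx : ContinuousOn x (Icc t₀ T)) :
    (∀ t ∈ Icc t₀ T, x t = lam * (∫ s in t₀..t, K t s * x s) + g t) ↔
      ∀ t ∈ Icc t₀ T, x t = g t + ∫ s in t₀..t, resolventKernel K lam t s * g s := by
  set y := fun t => g t + ∫ s in t₀..t, resolventKernel K lam t s * g s
  have hy : ContinuousOn y (Icc t₀ T) := continuousOn_add_integral_resolventKernel_mul hTT hK hg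
  have hysol (t : ℝ) (ht : t ∈ Icc t₀ T) : y t = lam * (∫ s in t₀..t, K t s * y s) + g t :=
    volterra_resolventKernel_solution hK hg ht
  constructor
  · intro hxsol t ht
    refine sub_eq_zero.mp (eqOn_zero_of_volterra (lam := lam) hK (hx.sub hy) (fun t ht => ?_) ht)
    have hlin := integral_sub (hK.intervalIntegrable_triangle_row_mul hx ht)
      (hK.intervalIntegrable_triangle_row_mul hy ht)
    simp only [← mul_sub] at hlin
    simp only [Pi.sub_apply, hlin]
    rw [hxsol t ht, hysol t ht]
    ring
  · intro hxy t ht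
    rw [hxy t ht]
    refine (hysol t ht).trans ?_
    congr 2
    refine integral_congr fun s hs => ?_
    rw [uIcc_of_le ht.1] at hs
    simp only [y, hxy s ⟨hs.1, hs.2.trans ht.2⟩]

end Volterra

lemma integral_mul_sub_sum_mul {ι : Type*} [Fintype ι] {r f : ℝ → ℝ} {e : ι → ℝ → ℝ} {a b : ℝ}
    (c : ι → ℝ) (hf : IntervalIntegrable (fun s => r s * f s) volume a b)
    (he : ∀ j, IntervalIntegrable (fun s => r s * e j s) volume a b) :
    ∫ s in a..b, r s * (f s - ∑ j, e j s * c j) =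
      (∫ s in a..b, r s * f s) - ∑ j, (∫ s in a..b, r s * e j s) * c j := by
  have hsum : IntervalIntegrable (fun s => ∑ j, r s * e j s * c j) volume a b := by
    simpa only [Finset.sum_fn] using
      IntervalIntegrable.sum Finset.univ fun j _ => (he j).mul_const (c j)
  simp_rw [mul_sub, Finset.mul_sum, ← mul_assoc]
  rw [integral_sub hf hsum, intervalIntegral.integral_finsetSum fun j _ => (he j).mul_const (c j)]
  simp_rw [intervalIntegral.integral_mul_const]

lemma loaded_volterra_iff {ι : Type*} [Fintype ι] {K : ℝ → ℝ → ℝ} {t₀ T lam : ℝ}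
    {f x : ℝ → ℝ} {a : ι → ℝ → ℝ} (hTT : t₀ ≤ T) (hK : ContinuousOn (uncurry K) (triangle t₀ T))
    (hf : ContinuousOn f (Icc t₀ T)) (ha : ∀ j, ContinuousOn (a j) (Icc t₀ T))
    (hx : ContinuousOn x (Icc t₀ T)) (c : ι → ℝ) :
    (∀ t ∈ Icc t₀ T, x t + ∑ j, a j t * c j = lam * (∫ s in t₀..t, K t s * x s) + f t) ↔
      ∀ t ∈ Icc t₀ T, x t = (f t + ∫ s in t₀..t, resolventKernel K lam t s * f s) -
        ∑ j, (a j t + ∫ s in t₀..t, resolventKernel K lam t s * a j s) * c j := by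
  have hg : ContinuousOn (fun t => f t - ∑ j, a j t * c j) (Icc t₀ T) :=
    hf.sub (continuousOn_finsetSum _ fun j _ => (ha j).mul continuousOn_const)
  have hR := continuousOn_resolventKernel hTT hK lam
  calc _ ↔ ∀ t ∈ Icc t₀ T,
        x t = lam * (∫ s in t₀..t, K t s * x s) + (f t - ∑ j, a j t * c j) :=
        forall₂_congr fun t _ => by constructor <;> intro h <;> linarith
    _ ↔ _ := volterra_iff_resolventKernel hTT hK hg hx
    _ ↔ _ := forall₂_congr fun t ht => by
        rw [integral_mul_sub_sum_mul c (hR.intervalIntegrable_triangle_row_mul hf ht)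
          fun j => hR.intervalIntegrable_triangle_row_mul (ha j) ht]
        simp only [add_mul, Finset.sum_add_distrib]
        constructor <;> intro h <;> rw [h] <;> ring

theorem lvie_solutions_biject_with_slae_solutions_general
    (t₀ T : ℝ) (ht : t₀ < T) (m : ℕ)
    (p : Fin (m - 1) → ℝ)
    (hp : ∀ j, t₀ < p j ∧ p j < T)
    (f : ℝ → ℝ) (hf : ContinuousOn f (Set.Icc t₀ T))
    (a : Fin (m - 1) → ℝ → ℝ) (ha : ∀ j, ContinuousOn (a j) (Set.Icc t₀ T))
    (K : ℝ → ℝ → ℝ)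
    (hK : ContinuousOn (fun q : ℝ × ℝ => K q.1 q.2)
      {q : ℝ × ℝ | t₀ ≤ q.2 ∧ q.2 ≤ q.1 ∧ q.1 ≤ T})
    (lam : ℝ)
    (Kn : ℕ → ℝ → ℝ → ℝ)
    (hKn1 : ∀ t s, Kn 1 t s = K t s)
    (hKnrec : ∀ n, 2 ≤ n → ∀ t s, Kn n t s = ∫ z in s..t, K t z * Kn (n - 1) z s)
    (R : ℝ → ℝ → ℝ → ℝ)
    (hR : ∀ t s lam', R t s lam' = ∑' n : ℕ, lam' ^ (n + 1) * Kn (n + 1) t s)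
    (F : ℝ → ℝ → ℝ)
    (hF : ∀ t lam', F t lam' = f t + ∫ s in t₀..t, R t s lam' * f s)
    (b : Fin (m - 1) → ℝ → ℝ → ℝ)
    (hb : ∀ j t lam', b j t lam' = a j t + ∫ s in t₀..t, R t s lam' * a j s)
    (A : Matrix (Fin (m - 1)) (Fin (m - 1)) ℝ)
    (hA : ∀ i j, A i j = (if i = j then 1 else 0) + b j (p i) lam)
    (d : Fin (m - 1) → ℝ)
    (hd : ∀ i, d i = F (p i) lam) :
    Set.BijOn
      (fun x : C(Set.Icc t₀ T, ℝ) => fun j => Set.IccExtend ht.le x (p j))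
      {x : C(Set.Icc t₀ T, ℝ) |
        ∀ t ∈ Set.Icc t₀ T,
          Set.IccExtend ht.le x t + ∑ j, a j t * Set.IccExtend ht.le x (p j) =
            lam * (∫ s in t₀..t, K t s * Set.IccExtend ht.le x s) + f t}
      {c : Fin (m - 1) → ℝ | A *ᵥ c = d} := by
  have hRK (t s : ℝ) : R t s lam = resolventKernel K lam t s := by
    simp only [hR, eq_iteratedKernel_of_recursion hKn1 hKnrec, resolventKernel]
  have hKc : ContinuousOn (uncurry K) (triangle t₀ T) := hK
  let sol (c : Fin (m - 1) → ℝ) : C(Icc t₀ T, ℝ) :=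
    ⟨fun t => F t lam - ∑ j, b j t lam * c j, by
      simp only [hF, hb, hRK]
      exact ((continuousOn_add_integral_resolventKernel_mul ht.le hKc hf).sub
        (continuousOn_finsetSum _ fun j _ =>
          (continuousOn_add_integral_resolventKernel_mul ht.le hKc (ha j)).mul
            continuousOn_const)).domRestrict⟩
  let ev (x : C(Icc t₀ T, ℝ)) (j : Fin (m - 1)) : ℝ := IccExtend ht.le x (p j)
  convert bijOn_fixedPoints_comp sol ev using 1
  · ext x
    rw [mem_ofPred_eq, loaded_volterra_iff ht.le hKc hf ha x.continuous.Icc_extend'.continuousOn,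
      mem_fixedPoints, IsFixedPt, ContinuousMap.ext_iff, Subtype.forall]
    refine forall₂_congr fun t ht' => ?_
    simp [sol, ev, hF, hb, hRK, IccExtend_of_mem ht.le x ht', eq_comm]
  · ext c
    have hAc (i : Fin (m - 1)) : (A *ᵥ c) i = c i + ∑ j, b j (p i) lam * c j := by
      simp [mulVec, dotProduct, hA, add_mul, Finset.sum_add_distrib]
    have hev (i : Fin (m - 1)) : ev (sol c) i = F (p i) lam - ∑ j, b j (p i) lam * c j :=
      IccExtend_of_mem ht.le _ ⟨(hp i).1.le, (hp i).2.le⟩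
    simp only [mem_ofPred_eq, mem_fixedPoints, IsFixedPt, funext_iff, Function.comp_apply, hAc,
      hev, hd]
    exact forall_congr' fun i => by rw [sub_eq_iff_eq_add, eq_comm]

/-- The load map x ↦ (x(t₁),…,x(t_{m-1})) is a bijection from the set of continuous
solutions of the LVIE onto the solution set of the linear system A(λ)c = d(λ). -/
theorem lvie_solutions_biject_with_slae_solutions
    (t₀ T : ℝ) (ht : t₀ < T) (m : ℕ) (hm : 2 ≤ m)
    (p : Fin (m - 1) → ℝ) (hpmono : StrictMono p)
    (hp : ∀ j, t₀ < p j ∧ p j < T)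
    (f : ℝ → ℝ) (hf : ContinuousOn f (Set.Icc t₀ T))
    (a : Fin (m - 1) → ℝ → ℝ) (ha : ∀ j, ContinuousOn (a j) (Set.Icc t₀ T))
    (K : ℝ → ℝ → ℝ)
    (hK : ContinuousOn (fun q : ℝ × ℝ => K q.1 q.2)
      {q : ℝ × ℝ | t₀ ≤ q.2 ∧ q.2 ≤ q.1 ∧ q.1 ≤ T})
    (lam : ℝ)
    (Kn : ℕ → ℝ → ℝ → ℝ)
    (hKn1 : ∀ t s, Kn 1 t s = K t s)
    (hKnrec : ∀ n, 2 ≤ n → ∀ t s, Kn n t s = ∫ z in s..t, K t z * Kn (n - 1) z s)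
    (R : ℝ → ℝ → ℝ → ℝ)
    (hR : ∀ t s lam', R t s lam' = ∑' n : ℕ, lam' ^ (n + 1) * Kn (n + 1) t s)
    (F : ℝ → ℝ → ℝ)
    (hF : ∀ t lam', F t lam' = f t + ∫ s in t₀..t, R t s lam' * f s)
    (b : Fin (m - 1) → ℝ → ℝ → ℝ)
    (hb : ∀ j t lam', b j t lam' = a j t + ∫ s in t₀..t, R t s lam' * a j s)
    (A : Matrix (Fin (m - 1)) (Fin (m - 1)) ℝ)
    (hA : ∀ i j, A i j = (if i = j then 1 else 0) + b j (p i) lam)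
    (d : Fin (m - 1) → ℝ)
    (hd : ∀ i, d i = F (p i) lam) :
    Set.BijOn
      (fun x : C(Set.Icc t₀ T, ℝ) => fun j => Set.IccExtend ht.le x (p j))
      {x : C(Set.Icc t₀ T, ℝ) |
        ∀ t ∈ Set.Icc t₀ T,
          Set.IccExtend ht.le x t + ∑ j, a j t * Set.IccExtend ht.le x (p j) =
            lam * (∫ s in t₀..t, K t s * Set.IccExtend ht.le x s) + f t}
      {c : Fin (m - 1) → ℝ | A *ᵥ c = d} :=
  lvie_solutions_biject_with_slae_solutions_general t₀ T ht m p hp f hf a ha K hK lam Kn hKn1 hKnrec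
    R hR F hF b hb A hA d hd
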